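/- Every real symmetric diagonally dominant matrix with nonnegative diagonal decomposes into 2×2 blocks: if M is an n×n real symmetric matrix with M_ii ≥ Σ_{j ≠ i} |M_ij| for every i, then M can be written as M = D + Σ_{i<j} [e_i, e_j] B_{ij} [e_i, e_j]ᵀ, where D is a diagonal matrix with nonnegative entries and each B_{ij} is a 2×2 real symmetric positive semidefinite matrix. In particular, every such M is positive semidefinite. -/

import Mathlib

open Matrix Finset

/-- The `n×n` real matrix `[e_i, e_j] B [e_i, e_j]ᵀ` supported on the principal submatrix
indexed by `{i, j}`, with entries given by the `2×2` matrix `B`. -/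
def emb2R {n : ℕ} (i j : Fin n) (B : Matrix (Fin 2) (Fin 2) ℝ) :
    Matrix (Fin n) (Fin n) ℝ :=
  Matrix.single i i (B 0 0) + Matrix.single i j (B 0 1) +
    Matrix.single j i (B 1 0) + Matrix.single j j (B 1 1)

/-!
Every off-diagonal pair `M i j = M j i = a` is carried by the block `!![|a|, a; a, |a|]`, which
is positive semidefinite. These blocks reproduce the off-diagonal part of `M` exactly and use up
`∑_{j ≠ i} |M i j|` of each diagonal entry; diagonal dominance says exactly that what is left of
the diagonal is nonnegative.
-/

theorem Finset.sum_filter_lt_add_swap {α β : Type*} [Fintype α] [LinearOrder α]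
    [AddCommMonoid β] (f : α → α → β) :
    ∑ p ∈ univ.filter (fun p : α × α => p.1 < p.2), (f p.1 p.2 + f p.2 p.1) =
      ∑ i, ∑ j ∈ univ.erase i, f i j := by
  have swap_lt : ∑ p ∈ univ.filter (fun p : α × α => p.1 < p.2), f p.2 p.1 =
      ∑ p ∈ univ.filter (fun p : α × α => p.2 < p.1), f p.1 p.2 :=
    sum_nbij' Prod.swap Prod.swap (by simp) (by simp) (by simp) (by simp) (by simp)
  rw [sum_add_distrib, swap_lt, ← sum_union (disjoint_filter.2 fun p _ h => h.not_gt)]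
  exact sum_finset_product' _ _ _ fun p => by simpa using ne_comm

theorem Matrix.sum_sum_erase_single_add_diagonal {α m : Type*} [AddCommMonoid α] [Fintype m]
    [DecidableEq m] (M : Matrix m m α) :
    ∑ i, ∑ j ∈ univ.erase i, single i j (M i j) + diagonal M.diag = M := by
  conv_rhs => rw [matrix_eq_sum_single M]
  rw [← sum_single_eq_diagonal, ← sum_add_distrib]
  exact sum_congr rfl fun i _ => sum_erase_add _ _ (mem_univ i)

theorem Matrix.sum_sum_single_self {α ι m : Type*} [AddCommMonoid α] [Fintype m] [DecidableEq m]
    (s : m → Finset ι) (c : m → ι → α) :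
    ∑ i, ∑ j ∈ s i, single i i (c i j) = diagonal fun i => ∑ j ∈ s i, c i j := by
  rw [← sum_single_eq_diagonal]
  exact sum_congr rfl fun i _ => (map_sum (singleAddMonoidHom (α := α) i i) _ _).symm

theorem Matrix.posSemidef_fin_two_of_abs_le {x a : ℝ} (h : |a| ≤ x) :
    (!![x, a; a, x]).PosSemidef := by
  refine .of_dotProduct_mulVec_nonneg ?_ fun v => ?_
  · ext i j
    fin_cases i <;> fin_cases j <;> rfl
  · simp [dotProduct, mulVec, Fin.sum_univ_two]
    nlinarith [abs_mul_abs_self a, sq_nonneg (v 0 + v 1), sq_nonneg (v 0 - v 1),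
      le_abs_self a, neg_abs_le a]

def pairSelector {n : ℕ} (i j : Fin n) : Matrix (Fin 2) (Fin n) ℝ :=
  Matrix.of ![Pi.single i 1, Pi.single j 1]

theorem emb2R_eq_transpose_mul_mul {n : ℕ} (i j : Fin n) (B : Matrix (Fin 2) (Fin 2) ℝ) :
    emb2R i j B = (pairSelector i j)ᵀ * B * pairSelector i j := by
  ext a b
  simp only [emb2R, pairSelector, Matrix.add_apply, single_apply, mul_apply, Fin.sum_univ_two,
    transpose_apply, of_apply, cons_val_zero, cons_val_one, Pi.single_apply, ite_and]
  split_ifs <;> subst_vars <;> first | ring1 | simp_all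

theorem Matrix.PosSemidef.emb2R {n : ℕ} {B : Matrix (Fin 2) (Fin 2) ℝ} (hB : B.PosSemidef)
    (i j : Fin n) : (emb2R i j B).PosSemidef := by
  rw [emb2R_eq_transpose_mul_mul, ← conjTranspose_eq_transpose_of_trivial]
  exact hB.conjTranspose_mul_mul_same _

def pairBlock {n : ℕ} (M : Matrix (Fin n) (Fin n) ℝ) (i j : Fin n) : Matrix (Fin 2) (Fin 2) ℝ :=
  !![|M i j|, M i j; M j i, |M j i|]

theorem emb2R_pairBlock {n : ℕ} (M : Matrix (Fin n) (Fin n) ℝ) (i j : Fin n) :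
    emb2R i j (pairBlock M i j) =
      (single i j (M i j) + single i i |M i j|) + (single j i (M j i) + single j j |M j i|) := by
  simp only [emb2R, pairBlock, of_apply, cons_val', cons_val_zero, cons_val_one, empty_val',
    cons_val_fin_one]
  abel

theorem eq_diagonal_add_sum_emb2R_pairBlock {n : ℕ} (M : Matrix (Fin n) (Fin n) ℝ) :
    M = diagonal (fun i => M i i - ∑ j ∈ univ.erase i, |M i j|) +
      ∑ p ∈ univ.filter (fun p : Fin n × Fin n => p.1 < p.2),
        emb2R p.1 p.2 (pairBlock M p.1 p.2) := by
  simp only [emb2R_pairBlock]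
  rw [sum_filter_lt_add_swap (fun i j => single i j (M i j) + single i i |M i j|)]
  simp only [sum_add_distrib, sum_sum_single_self]
  rw [add_left_comm, diagonal_add]
  simp only [sub_add_cancel]
  exact M.sum_sum_erase_single_add_diagonal.symm

theorem Matrix.IsSymm.posSemidef_pairBlock {n : ℕ} {M : Matrix (Fin n) (Fin n) ℝ}
    (hM : M.IsSymm) (i j : Fin n) : (pairBlock M i j).PosSemidef := by
  rw [pairBlock, hM.apply i j]
  exact posSemidef_fin_two_of_abs_le le_rfl

/-- Every real symmetric diagonally dominant matrix with nonnegative diagonal decomposes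
as a nonnegative diagonal matrix plus a sum of PSD `2×2` principal embeddings; in
particular it is positive semidefinite. -/
theorem diagDominant_decomposition (n : ℕ)
    (M : Matrix (Fin n) (Fin n) ℝ) (hM : M.IsSymm)
    (hdd : ∀ i : Fin n, ∑ j ∈ Finset.univ.erase i, |M i j| ≤ M i i) :
    (∃ (D : Fin n → ℝ) (B : Fin n → Fin n → Matrix (Fin 2) (Fin 2) ℝ),
        (∀ i, 0 ≤ D i) ∧
        (∀ i j : Fin n, i < j → (B i j).IsSymm ∧ (B i j).PosSemidef) ∧
        M = Matrix.diagonal D +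
          ∑ p ∈ Finset.univ.filter (fun p : Fin n × Fin n => p.1 < p.2),
            emb2R p.1 p.2 (B p.1 p.2)) ∧
      M.PosSemidef := by
  have hD : ∀ i, 0 ≤ M i i - ∑ j ∈ univ.erase i, |M i j| := fun i => sub_nonneg.2 (hdd i)
  have hB := hM.posSemidef_pairBlock
  have hdecomp := eq_diagonal_add_sum_emb2R_pairBlock M
  refine ⟨⟨_, pairBlock M, hD, fun i j _ => ⟨isHermitian_iff_isSymm.1 (hB i j).1, hB i j⟩,
    hdecomp⟩, ?_⟩
  rw [hdecomp]
  exact (posSemidef_diagonal_iff.2 hD).add (posSemidef_sum _ fun p _ => (hB _ _).emb2R _ _)
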